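/- arXiv:2111.15038 — 3 statements merged into one kernel-verified Lean document; each statement's English description precedes it below -/
import Mathlib

section
/- Let u = e^{iφ/3} with φ = 2π/p, τ ∈ ℂ, set α = 2 − u³ − conj(u)³ and β = (conj(u)² − u)τ, and let H = [[α, β, conj(β)], [conj(β), α, β], [β, conj(β), α]]. Then the matrix R₁ = [[u², τ, −u·conj(τ)], [0, conj(u), 0], [0, 0, conj(u)]] satisfies conj(R₁)ᵗ H R₁ = H, i.e. R₁ preserves the Hermitian form H. -/
/-!
Since `|u| = 1`, `conj u = u⁻¹`, and after this substitution each of the nine entries of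
`R₁ᴴ H R₁ - H` is a polynomial multiple of `u * conj u - 1`. The identity therefore holds in any
commutative star ring as soon as `u * star u = 1`.
-/

open Matrix Complex

section StarRing

variable {R : Type*} [CommRing R] [StarRing R]

def circulantHermitian (α β : R) : Matrix (Fin 3) (Fin 3) R :=
  !![α, β, star β; star β, α, β; β, star β, α]

def complexReflection (u τ : R) : Matrix (Fin 3) (Fin 3) R :=
  !![u ^ 2, τ, -u * star τ; 0, star u, 0; 0, 0, star u]

theorem complexReflection_conjTranspose (u τ : R) :
    (complexReflection u τ)ᴴ = !![star u ^ 2, 0, 0; star τ, u, 0; -star u * τ, 0, u] := by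
  ext i j
  fin_cases i <;> fin_cases j <;> simp [complexReflection, conjTranspose_apply, star_mul']

theorem complexReflection_conjTranspose_mul_circulantHermitian_mul (u τ : R)
    (hu : u * star u = 1) :
    (complexReflection u τ)ᴴ * circulantHermitian (2 - u ^ 3 - star u ^ 3) ((star u ^ 2 - u) * τ)
        * complexReflection u τ =
      circulantHermitian (2 - u ^ 3 - star u ^ 3) ((star u ^ 2 - u) * τ) := by
  rw [complexReflection_conjTranspose]
  set v := star u
  set t := star τ
  ext i j
  fin_cases i <;> fin_cases j <;>
    simp [circulantHermitian, complexReflection, mul_apply, Fin.sum_univ_three, star_mul', v, t]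
  · linear_combination (2 - v^3 + 2*u*v - u*v^4 - u^3 - u^4*v) * hu
  · linear_combination (-v^2*τ - u*τ - u^2*v*τ) * hu
  · linear_combination (-v*t + v^4*t + u*v^2*t + u^2*t + u^3*v*t) * hu
  · linear_combination (-v*t - u*v^2*t - u^2*t) * hu
  · linear_combination (2 - 2*τ*t - v^3 - u^3) * hu
  · linear_combination (v^2*t^2 + v^2*τ + 2*u*t^2 - u*τ) * hu
  · linear_combination (v^2*τ - u*τ + u*v^3*τ + u^2*v*τ + u^4*τ) * hu
  · linear_combination (-v*t + 2*v*τ^2 + u^2*t + u^2*τ^2) * hu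
  · linear_combination (2 - v^3 - v^3*τ*t - 2*u*v*τ*t - u^3 - u^3*τ*t) * hu

end StarRing

theorem exp_mul_star_exp_ofReal_mul_I (x : ℝ) : exp (x * I) * star (exp (x * I)) = 1 := by
  exact_mod_cast (mul_conj' _).trans (by rw [norm_exp_ofReal_mul_I]; norm_num)

theorem stmt9_general (φ : ℝ)
    (u : ℂ) (hu : u = Complex.exp (Complex.I * φ / 3))
    (τ α β : ℂ)
    (hα : α = 2 - u ^ 3 - (starRingEnd ℂ u) ^ 3)
    (hβ : β = ((starRingEnd ℂ u) ^ 2 - u) * τ)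
    (H R₁ : Matrix (Fin 3) (Fin 3) ℂ)
    (hH : H = !![α, β, starRingEnd ℂ β;
                 starRingEnd ℂ β, α, β;
                 β, starRingEnd ℂ β, α])
    (hR₁ : R₁ = !![u ^ 2, τ, -u * starRingEnd ℂ τ;
                   0, starRingEnd ℂ u, 0;
                   0, 0, starRingEnd ℂ u]) :
    R₁.conjTranspose * H * R₁ = H := by
  have hu_unit : u * star u = 1 := by
    rw [hu, show I * φ / 3 = (φ / 3 : ℝ) * I by push_cast; ring]
    exact exp_mul_star_exp_ofReal_mul_I _
  subst hH hR₁ hα hβ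
  exact complexReflection_conjTranspose_mul_circulantHermitian_mul u τ hu_unit

theorem stmt9 (p : ℕ) (hp : 2 ≤ p) (φ : ℝ) (hφ : φ = 2 * Real.pi / p)
    (u : ℂ) (hu : u = Complex.exp (Complex.I * φ / 3))
    (τ α β : ℂ)
    (hα : α = 2 - u ^ 3 - (starRingEnd ℂ u) ^ 3)
    (hβ : β = ((starRingEnd ℂ u) ^ 2 - u) * τ)
    (H R₁ : Matrix (Fin 3) (Fin 3) ℂ)
    (hH : H = !![α, β, starRingEnd ℂ β;
                 starRingEnd ℂ β, α, β;
                 β, starRingEnd ℂ β, α])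
    (hR₁ : R₁ = !![u ^ 2, τ, -u * starRingEnd ℂ τ;
                   0, starRingEnd ℂ u, 0;
                   0, 0, starRingEnd ℂ u]) :
    R₁.conjTranspose * H * R₁ = H :=
  stmt9_general φ u hu τ α β hα hβ H R₁ hH hR₁
end

section
/- Let G be a group, j, r₁ ∈ G with j³ = 1, r₂ = j r₁ j⁻¹, r₃ = j r₂ j⁻¹, and suppose (r₁ j)⁵ = 1. Then j = r₂ r₃ r₁ r₂ r₃ = r₃ r₁ r₂ r₃ r₁ = r₁ r₂ r₃ r₁ r₂, and (r₁ j)² = r₃⁻¹ r₂⁻¹ r₁⁻¹. -/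
theorem stmt15 {G : Type*} [Group G] (j r₁ : G) (hj : j ^ 3 = 1)
    (r₂ r₃ : G) (hr₂ : r₂ = j * r₁ * j⁻¹) (hr₃ : r₃ = j * r₂ * j⁻¹)
    (h5 : (r₁ * j) ^ 5 = 1) :
    j = r₂ * r₃ * r₁ * r₂ * r₃ ∧ j = r₃ * r₁ * r₂ * r₃ * r₁ ∧
      j = r₁ * r₂ * r₃ * r₁ * r₂ ∧ (r₁ * j) ^ 2 = r₃⁻¹ * r₂⁻¹ * r₁⁻¹ := by
  subst hr₂ hr₃
  have hjj : ∀ x : G, j * (j * (j * x)) = x := by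
    intro x
    have : j ^ 3 * x = x := by rw [hj, one_mul]
    simpa [pow_succ, mul_assoc] using this
  have hji : j⁻¹ = j * j := by
    rw [eq_comm, ← mul_inv_eq_one]
    simpa [pow_succ, mul_assoc] using hj
  have ha : ∀ x : G, r₁ * (j * (r₁ * (j * (r₁ * (j * (r₁ * (j * (r₁ * (j * x))))))))) = x := by
    intro x
    have : (r₁ * j) ^ 5 * x = x := by rw [h5, one_mul]
    simpa [pow_succ, mul_assoc] using this
  have ha1 : r₁ * (j * (r₁ * (j * (r₁ * (j * (r₁ * (j * (r₁ * j)))))))) = 1 := by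
    simpa using ha 1
  have ha2 : j * (r₁ * (j * (r₁ * (j * (r₁ * (j * (r₁ * (j * r₁)))))))) = 1 := by
    apply mul_right_cancel (b := j)
    simpa [mul_assoc] using congrArg (j * ·) ha1
  refine ⟨?_, ?_, ?_, ?_⟩
  · simp [hji, mul_assoc, hjj, ha1, eq_comm]
  · simp [hji, mul_assoc, hjj, ha2, eq_comm]
  · simp [hji, mul_assoc, hjj, ha, eq_comm]
  · have h23 : (r₁ * j) ^ 2 = ((r₁ * j) ^ 3)⁻¹ :=
      eq_inv_of_mul_eq_one_left (by rw [← pow_add]; exact h5)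
    rw [h23]
    simp [pow_succ, mul_inv_rev, hji, mul_assoc, hjj]
end

section
/- Let u, ρ, σ, τ ∈ ℂ with |u| = 1, and define R₁ = [[u², ρ, −u·conj(τ)],[0, conj(u), 0],[0, 0, conj(u)]], R₂ = [[conj(u), 0, 0],[−u·conj(ρ), u², σ],[0, 0, conj(u)]], R₃ = [[conj(u), 0, 0],[0, conj(u), 0],[τ, −u·conj(σ), u²]]. Let H be the Hermitian matrix with diagonal α = 2 − u³ − conj(u)³ and entries H₁₂ = β₁ = (conj(u)² − u)ρ, H₂₃ = β₂ = (conj(u)² − u)σ, H₃₁ = β₃ = (conj(u)² − u)τ (and conjugates symmetrically). Then det(Rᵢ) = 1 and conj(Rᵢ)ᵗ H Rᵢ = H for i = 1, 2, 3. -/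
/-! Since `star u = u⁻¹`, invariance of `H` under the first generator is an entrywise identity of
rational functions in `u`. The other two cases follow from it by symmetry: relabelling the
coordinates cyclically (`i ↦ i + 1`) while shifting the parameters `(ρ, σ, τ) ↦ (σ, τ, ρ)` carries
`H` to itself, `R₁` to `R₂` and `R₂` to `R₃`, and conjugating by a permutation preserves both the
determinant and the relation `Rᴴ H R = H`. -/

open Matrix Complex

namespace ThompsonTriangle

def MemSU {n K : Type*} [Fintype n] [DecidableEq n] [CommRing K] [StarRing K]
    (H R : Matrix n n K) : Prop :=
  R.det = 1 ∧ Rᴴ * H * R = H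

theorem MemSU.submatrix {n m K : Type*} [Fintype n] [DecidableEq n] [Fintype m] [DecidableEq m]
    [CommRing K] [StarRing K] {H R : Matrix m m K} (h : MemSU H R) (e : n ≃ m) :
    MemSU (H.submatrix e e) (R.submatrix e e) := by
  refine ⟨(det_submatrix_equiv_self e R).trans h.1, ?_⟩
  rw [conjTranspose_submatrix, submatrix_mul_equiv, submatrix_mul_equiv, h.2]

variable {K : Type*} [Field K] [StarRing K]

def hermitianForm (u ρ σ τ : K) : Matrix (Fin 3) (Fin 3) K :=
  !![2 - u ^ 3 - star u ^ 3, (star u ^ 2 - u) * ρ, star ((star u ^ 2 - u) * τ);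
     star ((star u ^ 2 - u) * ρ), 2 - u ^ 3 - star u ^ 3, (star u ^ 2 - u) * σ;
     (star u ^ 2 - u) * τ, star ((star u ^ 2 - u) * σ), 2 - u ^ 3 - star u ^ 3]

def reflection₁ (u ρ τ : K) : Matrix (Fin 3) (Fin 3) K :=
  !![u ^ 2, ρ, -u * star τ; 0, star u, 0; 0, 0, star u]

def reflection₂ (u ρ σ : K) : Matrix (Fin 3) (Fin 3) K :=
  !![star u, 0, 0; -u * star ρ, u ^ 2, σ; 0, 0, star u]

def reflection₃ (u σ τ : K) : Matrix (Fin 3) (Fin 3) K :=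
  !![star u, 0, 0; 0, star u, 0; τ, -u * star σ, u ^ 2]

variable (u ρ σ τ : K)

theorem hermitianForm_eq_submatrix_finRotate :
    hermitianForm u ρ σ τ =
      (hermitianForm u σ τ ρ).submatrix (finRotate 3).symm (finRotate 3).symm := by
  ext i j
  fin_cases i <;> fin_cases j <;> rfl

theorem reflection₂_eq_submatrix_finRotate :
    reflection₂ u ρ σ = (reflection₁ u σ ρ).submatrix (finRotate 3).symm (finRotate 3).symm := by
  ext i j
  fin_cases i <;> fin_cases j <;> rfl

theorem reflection₃_eq_submatrix_finRotate :
    reflection₃ u σ τ = (reflection₂ u σ τ).submatrix (finRotate 3).symm (finRotate 3).symm := by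
  ext i j
  fin_cases i <;> fin_cases j <;> rfl

variable {u}

theorem det_reflection₁ (hu : u * star u = 1) : (reflection₁ u ρ τ).det = 1 := by
  simp only [reflection₁, det_fin_three, of_apply, cons_val', cons_val_zero, cons_val_one, cons_val,
    cons_val_fin_one, mul_zero, zero_mul, sub_zero, add_zero]
  linear_combination (u * star u + 1) * hu

theorem reflection₁_conjTranspose_mul_hermitianForm_mul (hu : u * star u = 1) :
    (reflection₁ u ρ τ)ᴴ * hermitianForm u ρ σ τ * reflection₁ u ρ τ = hermitianForm u ρ σ τ := by
  have hu0 : u ≠ 0 := left_ne_zero_of_mul_eq_one hu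
  have hstar : star u = u⁻¹ := eq_inv_of_mul_eq_one_right hu
  ext i j
  fin_cases i <;> fin_cases j <;>
    simp only [reflection₁, hermitianForm, mul_apply, conjTranspose_apply, Fin.sum_univ_three,
      of_apply, cons_val', cons_val_zero, cons_val_one, cons_val, cons_val_fin_one, Fin.isValue,
      Fin.zero_eta, Fin.mk_one, Fin.reduceFinMk, hstar, star_mul', star_sub, star_neg, star_pow,
      star_inv₀, star_star, star_zero, inv_inv, zero_mul, mul_zero, add_zero] <;>
    field_simp <;> ring

theorem memSU_reflection₁ (hu : u * star u = 1) :
    MemSU (hermitianForm u ρ σ τ) (reflection₁ u ρ τ) :=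
  ⟨det_reflection₁ ρ τ hu, reflection₁_conjTranspose_mul_hermitianForm_mul ρ σ τ hu⟩

theorem memSU_reflection₂ (hu : u * star u = 1) :
    MemSU (hermitianForm u ρ σ τ) (reflection₂ u ρ σ) := by
  rw [hermitianForm_eq_submatrix_finRotate, reflection₂_eq_submatrix_finRotate]
  exact (memSU_reflection₁ σ τ ρ hu).submatrix _

theorem memSU_reflection₃ (hu : u * star u = 1) :
    MemSU (hermitianForm u ρ σ τ) (reflection₃ u σ τ) := by
  rw [hermitianForm_eq_submatrix_finRotate, reflection₃_eq_submatrix_finRotate]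
  exact (memSU_reflection₂ σ τ ρ hu).submatrix _

end ThompsonTriangle

open ThompsonTriangle in
theorem stmt18 (u ρ σ τ : ℂ) (hu : ‖u‖ = 1)
    (α β₁ β₂ β₃ : ℂ)
    (hα : α = 2 - u ^ 3 - (starRingEnd ℂ u) ^ 3)
    (hβ₁ : β₁ = ((starRingEnd ℂ u) ^ 2 - u) * ρ)
    (hβ₂ : β₂ = ((starRingEnd ℂ u) ^ 2 - u) * σ)
    (hβ₃ : β₃ = ((starRingEnd ℂ u) ^ 2 - u) * τ)
    (H R₁ R₂ R₃ : Matrix (Fin 3) (Fin 3) ℂ)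
    (hH : H = !![α, β₁, starRingEnd ℂ β₃;
                 starRingEnd ℂ β₁, α, β₂;
                 β₃, starRingEnd ℂ β₂, α])
    (hR₁ : R₁ = !![u ^ 2, ρ, -u * starRingEnd ℂ τ;
                   0, starRingEnd ℂ u, 0;
                   0, 0, starRingEnd ℂ u])
    (hR₂ : R₂ = !![starRingEnd ℂ u, 0, 0;
                   -u * starRingEnd ℂ ρ, u ^ 2, σ;
                   0, 0, starRingEnd ℂ u])
    (hR₃ : R₃ = !![starRingEnd ℂ u, 0, 0;
                   0, starRingEnd ℂ u, 0;
                   τ, -u * starRingEnd ℂ σ, u ^ 2]) :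
    (R₁.det = 1 ∧ R₁.conjTranspose * H * R₁ = H) ∧
      (R₂.det = 1 ∧ R₂.conjTranspose * H * R₂ = H) ∧
      (R₃.det = 1 ∧ R₃.conjTranspose * H * R₃ = H) := by
  have hu' : u * star u = 1 := by
    rw [← starRingEnd_apply, mul_conj', hu]
    norm_num
  subst hα hβ₁ hβ₂ hβ₃ hH hR₁ hR₂ hR₃
  exact ⟨memSU_reflection₁ ρ σ τ hu', memSU_reflection₂ ρ σ τ hu', memSU_reflection₃ ρ σ τ hu'⟩
end
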